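/- Let n ≥ 1 and let ℐ be an interval system on {1,…,n}. Let ε_ℐ : ℝ^{2^n} → ℝ be the linear functional a ↦ Σ_{S ∈ B_{{1,…,n}}(ℐ)} a_S. Then the cone K_{n+1} linearly spans all of ℝ^{2^n}, ε_ℐ is nonnegative on K_{n+1}, and the face K_{n+1} ∩ ker(ε_ℐ) is a facet of K_{n+1}, i.e., its linear span has dimension 2^n − 1. -/

import Mathlib

/-- A graded poset: a finite poset with a least element `bot`, a greatest element `top`,
and a rank function that is `0` at `bot` and increases by one along covering relations. -/
structure GradedPoset where
  carrier : Type
  [fintypeCarrier : Fintype carrier]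
  [partialOrderCarrier : PartialOrder carrier]
  bot : carrier
  top : carrier
  bot_le : ∀ x : carrier, bot ≤ x
  le_top : ∀ x : carrier, x ≤ top
  rank : carrier → ℕ
  rank_bot : rank bot = 0
  rank_covBy : ∀ x y : carrier, x ⋖ y → rank y = rank x + 1

attribute [instance] GradedPoset.fintypeCarrier GradedPoset.partialOrderCarrier

/-- The flag number `f_S(P)`: the number of chains in `P` whose set of ranks is `S`. -/
noncomputable def flagNum (P : GradedPoset) (S : Finset ℕ) : ℕ :=
  Set.ncard {c : Finset P.carrier |
    IsChain (· ≤ ·) (↑c : Set P.carrier) ∧ c.image P.rank = S}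

/-- The cone `K_r` of all linear inequalities valid on flag `f`-vectors of graded posets
of rank `r`, modelled inside `Finset ℕ → ℝ` as the functions supported on subsets of
`{1,…,r-1}` whose associated functional is nonnegative on all graded posets of rank `r`. -/
def coneK (r : ℕ) : Set (Finset ℕ → ℝ) :=
  {a | (∀ S : Finset ℕ, ¬ S ⊆ Finset.Icc 1 (r - 1) → a S = 0) ∧
    ∀ P : GradedPoset, P.rank P.top = r →
      0 ≤ ∑ S ∈ (Finset.Icc 1 (r - 1)).powerset, a S * (flagNum P S : ℝ)}

/-- The subspace of `Finset ℕ → ℝ` of vectors supported on subsets of `{1,…,n}`,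
a copy of `ℝ^{2^n}`. -/
def supportedSpace (n : ℕ) : Submodule ℝ (Finset ℕ → ℝ) where
  carrier := {a | ∀ S : Finset ℕ, ¬ S ⊆ Finset.Icc 1 n → a S = 0}
  add_mem' := by
    intro a b ha hb S hS
    simp only [Pi.add_apply, ha S hS, hb S hS, add_zero]
  zero_mem' := by intro S hS; rfl
  smul_mem' := by
    intro c a ha S hS
    simp only [Pi.smul_apply, ha S hS, smul_zero]

/-!
The cone `K_{n+1}` contains every basis vector `e_S`, since flag numbers are nonnegative, and
every difference `e_{[1,n]} - e_S`, since a chain extends to one with any larger rank set, so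
that `f_S ≤ f_T` for `S ⊆ T`. The basis vectors span; the face contains `e_S` for the
non-blockers `S` and `e_{[1,n]} - e_S` for the blockers `S ≠ [1,n]`, which are `2^n - 1`
independent vectors, and it is proper because `ε_ℐ(e_{[1,n]}) = 1`.

Nonnegativity of `ε_ℐ` on `K_{n+1}` comes from the Billera–Hetyei posets: above each interval of
`ℐ` the poset splits into `N + 1` parallel branches, so that `f_S = (N + 1) ^ m(S)`, where `m(S)`
is the number of intervals meeting `S`. Dividing a valid inequality by `(N + 1) ^ |ℐ|` and letting
`N → ∞` leaves exactly the coefficients of the blockers.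
-/

open Finset

namespace GradedPoset

variable (P : GradedPoset) in
lemma rank_strictMono : StrictMono P.rank := by
  classical
  let := Fintype.toLocallyFiniteOrder (α := P.carrier)
  exact (strictMono_iff_forall_covBy P.rank).2 fun a b h => by rw [P.rank_covBy a b h]; omega

variable {P : GradedPoset}

lemma exists_rank_eq_of_le {x y : P.carrier} (hxy : x ≤ y) {r : ℕ} (hxr : P.rank x ≤ r)
    (hry : r ≤ P.rank y) : ∃ z, x ≤ z ∧ z ≤ y ∧ P.rank z = r := by
  induction h : r - P.rank x generalizing x with
  | zero => exact ⟨x, le_rfl, hxy, by omega⟩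
  | succ k ih =>
    obtain ⟨z, hxz, hzy⟩ := exists_covBy_le_of_lt (hxy.lt_of_ne (by rintro rfl; omega))
    have hz := P.rank_covBy x z hxz
    obtain ⟨w, hzw, hwy, hw⟩ := ih hzy (by omega) (by omega)
    exact ⟨w, hxz.le.trans hzw, hwy, hw⟩

lemma le_of_rank_le_of_isChain {s : Set P.carrier} (hs : IsChain (· ≤ ·) s) {x y : P.carrier}
    (hx : x ∈ s) (hy : y ∈ s) (h : P.rank x ≤ P.rank y) : x ≤ y :=
  (hs.total hx hy).elim id fun hyx => hyx.eq_or_lt.elim (fun e => e ▸ le_rfl)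
    fun hlt => absurd (P.rank_strictMono hlt) h.not_gt

lemma rank_injOn_of_isChain {s : Set P.carrier} (hs : IsChain (· ≤ ·) s) : Set.InjOn P.rank s :=
  fun _ hx _ hy h =>
    le_antisymm (le_of_rank_le_of_isChain hs hx hy h.le) (le_of_rank_le_of_isChain hs hy hx h.ge)

section DecidableEq

variable [DecidableEq P.carrier]

/-- Squeeze an element of rank `r` between the highest element of the chain of rank `≤ r`
and the lowest one of rank `≥ r` (using `bot` and `top` when there is none). -/
lemma exists_isChain_insert {c : Finset P.carrier} (hc : IsChain (· ≤ ·) (c : Set P.carrier))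
    {r : ℕ} (hr : r ≤ P.rank P.top) :
    ∃ z, P.rank z = r ∧ IsChain (· ≤ ·) (↑(insert z c) : Set P.carrier) := by
  set c' := insert P.bot (insert P.top c)
  have hc' : IsChain (· ≤ ·) (c' : Set P.carrier) := by
    simp only [c', coe_insert]
    exact (hc.insert fun b _ _ => Or.inr (P.le_top b)).insert fun b _ _ => Or.inl (P.bot_le b)
  obtain ⟨x, hx, hxmax⟩ := (c'.filter (P.rank · ≤ r)).exists_max_image P.rank
    ⟨P.bot, by simp [c', P.rank_bot]⟩
  obtain ⟨y, hy, hymin⟩ := (c'.filter (r ≤ P.rank ·)).exists_min_image P.rank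
    ⟨P.top, by simp [c', hr]⟩
  rw [mem_filter] at hx hy
  obtain ⟨z, hxz, hzy, rfl⟩ := exists_rank_eq_of_le
    (le_of_rank_le_of_isChain hc' hx.1 hy.1 (hx.2.trans hy.2)) hx.2 hy.2
  refine ⟨z, rfl, ?_⟩
  rw [coe_insert]
  refine hc.insert fun w hw _ => ?_
  have hw' : w ∈ c' := mem_insert_of_mem (mem_insert_of_mem hw)
  rcases le_total (P.rank w) (P.rank z) with h | h
  · exact Or.inr ((le_of_rank_le_of_isChain hc' hw' hx.1
      (hxmax w (mem_filter.2 ⟨hw', h⟩))).trans hxz)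
  · exact Or.inl (hzy.trans (le_of_rank_le_of_isChain hc' hy.1 hw'
      (hymin w (mem_filter.2 ⟨hw', h⟩))))

lemma exists_isChain_superset {c : Finset P.carrier} (hc : IsChain (· ≤ ·) (c : Set P.carrier))
    {T : Finset ℕ} (hT : ∀ r ∈ T, r ≤ P.rank P.top) :
    ∃ d, c ⊆ d ∧ IsChain (· ≤ ·) (d : Set P.carrier) ∧ d.image P.rank = c.image P.rank ∪ T := by
  induction T using Finset.induction_on with
  | empty => exact ⟨c, subset_rfl, hc, by simp⟩
  | insert r T _ ih =>
    obtain ⟨d, hcd, hd, hdT⟩ := ih fun s hs => hT s (mem_insert_of_mem hs)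
    obtain ⟨z, rfl, hz⟩ := exists_isChain_insert hd (hT _ (mem_insert_self _ T))
    exact ⟨insert z d, hcd.trans (subset_insert z d), hz, by rw [image_insert, hdT, union_insert]⟩

end DecidableEq

lemma flagNum_mono {S T : Finset ℕ} (hST : S ⊆ T) (hT : ∀ r ∈ T, r ≤ P.rank P.top) :
    flagNum P S ≤ flagNum P T := by
  classical
  refine (Set.ncard_le_ncard ?_ (Set.toFinite _)).trans
    (Set.ncard_image_le (f := fun d => d.filter (P.rank · ∈ S)) (Set.toFinite _))
  rintro c ⟨hc, rfl⟩
  obtain ⟨d, hcd, hd, hdT⟩ := exists_isChain_superset hc hT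
  refine ⟨d, ⟨hd, by rw [hdT, union_eq_right.2 hST]⟩, ?_⟩
  ext x
  simp only [mem_filter, mem_image]
  constructor
  · rintro ⟨hx, y, hy, hyx⟩
    rwa [← rank_injOn_of_isChain hd (hcd hy) hx hyx]
  · exact fun hx => ⟨hcd hx, x, hx, rfl⟩

end GradedPoset

namespace BilleraHetyei

variable (n N : ℕ) (ℐ : Finset (Finset ℕ))

/-- An element of rank `i ≤ n + 1` chooses one of `N + 1` branches for every interval of `ℐ`
containing `i`; the branch of an interval not containing `i` is normalised to `0`. -/
def Elem : Type :=
  {p : Fin (n + 2) × (ℐ → Fin (N + 1)) // ∀ I : ℐ, (p.1 : ℕ) ∉ (I : Finset ℕ) → p.2 I = 0}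

instance : Fintype (Elem n N ℐ) := by
  unfold Elem
  infer_instance

variable {n N ℐ}

namespace Elem

def rank (p : Elem n N ℐ) : ℕ := p.1.1

def branch (p : Elem n N ℐ) (I : ℐ) : Fin (N + 1) := p.1.2 I

lemma rank_le (p : Elem n N ℐ) : p.rank ≤ n + 1 := Nat.lt_succ_iff.1 p.1.1.2

lemma branch_eq_zero (p : Elem n N ℐ) {I : ℐ} (h : p.rank ∉ (I : Finset ℕ)) : p.branch I = 0 :=
  p.2 I h

lemma ext {p q : Elem n N ℐ} (hr : p.rank = q.rank)
    (hb : ∀ I : ℐ, p.rank ∈ (I : Finset ℕ) → p.branch I = q.branch I) : p = q := by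
  refine Subtype.ext (Prod.ext (Fin.ext hr) (funext fun I => ?_))
  by_cases hI : p.rank ∈ (I : Finset ℕ)
  · exact hb I hI
  · exact (p.branch_eq_zero hI).trans (q.branch_eq_zero (hr ▸ hI)).symm

def mk (i : ℕ) (hi : i ≤ n + 1) (h : ℐ → Fin (N + 1)) : Elem n N ℐ :=
  ⟨(⟨i, by omega⟩, fun I => if i ∈ (I : Finset ℕ) then h I else 0), fun _ hI => if_neg hI⟩

variable {i : ℕ} {hi : i ≤ n + 1} {h : ℐ → Fin (N + 1)} {I : ℐ}

@[simp] lemma rank_mk : (mk i hi h).rank = i := rfl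

lemma branch_mk_of_mem (hI : i ∈ (I : Finset ℕ)) : (mk i hi h).branch I = h I := if_pos hI

lemma eq_of_rank_eq {p q : Elem n N ℐ} (hr : p.rank = q.rank)
    (hb : ∀ I : ℐ, Set.Icc p.rank q.rank ⊆ (I : Set ℕ) → p.branch I = q.branch I) : p = q :=
  ext hr fun I hI => hb I (by rwa [← hr, Set.Icc_self, Set.singleton_subset_iff])

instance : PartialOrder (Elem n N ℐ) where
  le p q := p.rank ≤ q.rank ∧
    ∀ I : ℐ, Set.Icc p.rank q.rank ⊆ (I : Set ℕ) → p.branch I = q.branch I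
  le_refl _ := ⟨le_rfl, fun _ _ => rfl⟩
  le_trans _ _ _ hpq hqr := ⟨hpq.1.trans hqr.1, fun I hI =>
    (hpq.2 I ((Set.Icc_subset_Icc_right hqr.1).trans hI)).trans
      (hqr.2 I ((Set.Icc_subset_Icc_left hpq.1).trans hI))⟩
  le_antisymm _ _ hpq hqp := eq_of_rank_eq (le_antisymm hpq.1 hqp.1) hpq.2

lemma le_iff {p q : Elem n N ℐ} : p ≤ q ↔ p.rank ≤ q.rank ∧
    ∀ I : ℐ, Set.Icc p.rank q.rank ⊆ (I : Set ℕ) → p.branch I = q.branch I := Iff.rfl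

lemma rank_lt_rank_of_lt {p q : Elem n N ℐ} (h : p < q) : p.rank < q.rank :=
  h.le.1.lt_of_ne fun hr => h.ne (eq_of_rank_eq hr h.le.2)

/-- If `y` had rank at least `x.rank + 2`, the element of rank `x.rank + 1` taking its branches
from `x` where possible and from `y` otherwise would lie strictly between them. -/
lemma rank_covBy {x y : Elem n N ℐ} (hxy : x ⋖ y) : y.rank = x.rank + 1 := by
  have hlt := rank_lt_rank_of_lt hxy.lt
  by_contra hne
  let z : Elem n N ℐ := mk (x.rank + 1) (by have := y.rank_le; omega)
    fun I => if x.rank ∈ (I : Finset ℕ) then x.branch I else y.branch I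
  have hxz : x ≤ z := ⟨by simp [z], fun I hI => by
    simp only [z, rank_mk] at hI ⊢
    rw [branch_mk_of_mem (hI ⟨by omega, le_rfl⟩)]
    exact (if_pos (hI ⟨le_rfl, by omega⟩)).symm⟩
  have hzy : z ≤ y := ⟨by simp [z]; omega, fun I hI => by
    simp only [z, rank_mk] at hI ⊢
    rw [branch_mk_of_mem (hI ⟨le_rfl, by omega⟩)]
    split_ifs with hxI
    · refine hxy.le.2 I fun t ht => ?_
      rcases ht.1.eq_or_lt with rfl | h
      · exact hxI
      · exact hI ⟨h, ht.2⟩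
    · rfl⟩
  exact hxy.2 (lt_of_le_not_ge hxz fun h => by have := h.1; simp [z] at this)
    (lt_of_le_not_ge hzy fun h => by have := h.1; simp [z] at this; omega)

lemma branch_eq_of_isChain {s : Set (Elem n N ℐ)} (hs : IsChain (· ≤ ·) s)
    (hI : ((I : Finset ℕ) : Set ℕ).OrdConnected) {x y : Elem n N ℐ} (hx : x ∈ s) (hy : y ∈ s)
    (hxI : x.rank ∈ (I : Finset ℕ)) (hyI : y.rank ∈ (I : Finset ℕ)) : x.branch I = y.branch I :=
  (hs.total hx hy).elim (fun h => h.2 I (hI.out hxI hyI)) fun h => (h.2 I (hI.out hyI hxI)).symm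

end Elem

variable (n N ℐ) in
def poset (hℐ : ∀ I ∈ ℐ, I ⊆ Icc 1 n) : GradedPoset where
  carrier := Elem n N ℐ
  bot := Elem.mk 0 (Nat.zero_le _) 0
  top := Elem.mk (n + 1) le_rfl 0
  bot_le _ := Elem.le_iff.2
    ⟨Nat.zero_le _, fun I hI => absurd (hℐ I I.2 (hI ⟨le_rfl, Nat.zero_le _⟩)) (by simp)⟩
  le_top x := Elem.le_iff.2
    ⟨x.rank_le, fun I hI => absurd (hℐ I I.2 (hI ⟨x.rank_le, le_rfl⟩)) (by simp)⟩
  rank := Elem.rank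
  rank_bot := rfl
  rank_covBy _ _ := Elem.rank_covBy

variable (n) in
def chainOf (S : Finset ℕ) (h : ℐ → Fin (N + 1)) : Finset (Elem n N ℐ) :=
  univ.filter fun x => x.rank ∈ S ∧ ∀ I : ℐ, x.rank ∈ (I : Finset ℕ) → x.branch I = h I

lemma mem_chainOf {S : Finset ℕ} {h : ℐ → Fin (N + 1)} {x : Elem n N ℐ} :
    x ∈ chainOf n S h ↔ x.rank ∈ S ∧ ∀ I : ℐ, x.rank ∈ (I : Finset ℕ) → x.branch I = h I := by
  simp [chainOf]

lemma isChain_chainOf (S : Finset ℕ) (h : ℐ → Fin (N + 1)) :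
    IsChain (· ≤ ·) (↑(chainOf n S h) : Set (Elem n N ℐ)) := by
  have hle : ∀ x ∈ chainOf n S h, ∀ y ∈ chainOf n S h, x.rank ≤ y.rank → x ≤ y :=
    fun x hx y hy hxy => ⟨hxy, fun I hI => ((mem_chainOf.1 hx).2 I (hI ⟨le_rfl, hxy⟩)).trans
      ((mem_chainOf.1 hy).2 I (hI ⟨hxy, le_rfl⟩)).symm⟩
  intro x hx y hy _
  rcases le_total x.rank y.rank with hxy | hyx
  · exact Or.inl (hle x hx y hy hxy)
  · exact Or.inr (hle y hy x hx hyx)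

lemma image_rank_chainOf {S : Finset ℕ} (hS : ∀ i ∈ S, i ≤ n + 1) (h : ℐ → Fin (N + 1)) :
    (chainOf n S h).image Elem.rank = S := by
  refine Subset.antisymm (fun i hi => ?_) fun i hi =>
    mem_image.2 ⟨Elem.mk i (hS i hi) h, ?_, rfl⟩
  · obtain ⟨x, hx, rfl⟩ := mem_image.1 hi
    exact (mem_chainOf.1 hx).1
  · exact mem_chainOf.2 ⟨hi, fun I hI => Elem.branch_mk_of_mem hI⟩

variable (S : Finset ℕ) in
def extendBranches (g : ℐ.filter (fun I => (S ∩ I).Nonempty) → Fin (N + 1)) (I : ℐ) :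
    Fin (N + 1) :=
  if hI : (I : Finset ℕ) ∈ ℐ.filter (fun I => (S ∩ I).Nonempty) then g ⟨I, hI⟩ else 0

lemma injective_chainOf_extendBranches {S : Finset ℕ} (hS : ∀ i ∈ S, i ≤ n + 1) :
    Function.Injective fun g : ℐ.filter (fun I => (S ∩ I).Nonempty) → Fin (N + 1) =>
      chainOf n S (extendBranches S g) := by
  intro g g' (hgg' : chainOf n S _ = chainOf n S _)
  funext ⟨I, hIJ⟩
  obtain ⟨hIℐ, i, hi⟩ := mem_filter.1 hIJ
  rw [mem_inter] at hi
  have hmem : Elem.mk i (hS i hi.1) (extendBranches S g) ∈ chainOf n S (extendBranches S g') :=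
    hgg' ▸ mem_chainOf.2 ⟨hi.1, fun I hI => Elem.branch_mk_of_mem hI⟩
  have := (Elem.branch_mk_of_mem hi.2).symm.trans ((mem_chainOf.1 hmem).2 ⟨I, hIℐ⟩ hi.2)
  simpa [extendBranches, hIJ] using this

/-- The branches of `c` on the intervals meeting `S` are consistent along `c` because the
intervals are convex. -/
lemma exists_chainOf_extendBranches_eq (hconv : ∀ I ∈ ℐ, (I : Set ℕ).OrdConnected)
    {S : Finset ℕ} {c : Finset (Elem n N ℐ)} (hc : IsChain (· ≤ ·) (c : Set (Elem n N ℐ)))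
    (hcS : c.image Elem.rank = S) : ∃ g, chainOf n S (extendBranches S g) = c := by
  have hrep : ∀ I : ℐ.filter (fun I => (S ∩ I).Nonempty), ∃ x ∈ c, x.rank ∈ (I : Finset ℕ) := by
    rintro ⟨I, hIJ⟩
    obtain ⟨i, hi⟩ := (mem_filter.1 hIJ).2
    rw [mem_inter, ← hcS, mem_image] at hi
    obtain ⟨⟨x, hx, rfl⟩, hxI⟩ := hi
    exact ⟨x, hx, hxI⟩
  choose rep hrep_mem hrep_rank using hrep
  let g (I : ℐ.filter (fun I => (S ∩ I).Nonempty)) : Fin (N + 1) :=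
    (rep I).branch ⟨I, (mem_filter.1 I.2).1⟩
  have hfollow : ∀ y ∈ c, ∀ I : ℐ, y.rank ∈ (I : Finset ℕ) →
      y.branch I = extendBranches S g I := by
    intro y hy I hyI
    have hIJ : (I : Finset ℕ) ∈ ℐ.filter (fun I => (S ∩ I).Nonempty) :=
      mem_filter.2 ⟨I.2, y.rank, mem_inter.2 ⟨hcS ▸ mem_image_of_mem _ hy, hyI⟩⟩
    simp only [extendBranches, dif_pos hIJ, g]
    exact Elem.branch_eq_of_isChain hc (hconv I I.2) hy (hrep_mem _) hyI (hrep_rank _)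
  refine ⟨g, Finset.ext fun y => ⟨fun hy => ?_, fun hy => ?_⟩⟩
  · obtain ⟨hyS, hyg⟩ := mem_chainOf.1 hy
    obtain ⟨x, hx, hxy⟩ := mem_image.1 (hcS ▸ hyS : y.rank ∈ c.image Elem.rank)
    rwa [← Elem.ext hxy fun I hI => (hfollow x hx I hI).trans (hyg I (hxy ▸ hI)).symm]
  · exact mem_chainOf.2 ⟨hcS ▸ mem_image_of_mem _ hy, hfollow y hy⟩

/-- A chain with rank set `S` is determined by the branches it takes on the intervals
meeting `S`. -/
lemma flagNum_poset (hℐ : ∀ I ∈ ℐ, I ⊆ Icc 1 n) (hconv : ∀ I ∈ ℐ, (I : Set ℕ).OrdConnected)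
    {S : Finset ℕ} (hS : ∀ i ∈ S, i ≤ n + 1) :
    flagNum (poset n N ℐ hℐ) S = (N + 1) ^ #(ℐ.filter fun I => (S ∩ I).Nonempty) := by
  have hrange : {c : Finset (Elem n N ℐ) | IsChain (· ≤ ·) (c : Set (Elem n N ℐ)) ∧
      c.image Elem.rank = S} = Set.range fun g => chainOf n S (extendBranches S g) := by
    ext c
    refine ⟨fun ⟨hc, hcS⟩ => exists_chainOf_extendBranches_eq hconv hc hcS, ?_⟩
    rintro ⟨g, rfl⟩
    exact ⟨isChain_chainOf S _, image_rank_chainOf hS _⟩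
  change Set.ncard {c : Finset (Elem n N ℐ) | IsChain (· ≤ ·) (c : Set (Elem n N ℐ)) ∧
    c.image Elem.rank = S} = _
  rw [hrange, Set.ncard_range_of_injective (injective_chainOf_extendBranches hS), Nat.card_fun,
    Nat.card_eq_fintype_card, Fintype.card_fin, Nat.card_eq_fintype_card, Fintype.card_coe]

end BilleraHetyei

/-- Divide by `(N + 1) ^ k` and let `N → ∞`: the left side is the limit, at `x = 0`, of the
polynomial `∑ a i * x ^ (k - m i)` evaluated at `x = 1 / (N + 1)`. -/
lemma leadingCoeff_nonneg_of_forall_sum_mul_pow_nonneg {ι : Type*} (s : Finset ι) (a : ι → ℝ)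
    (m : ι → ℕ) {k : ℕ} (hmk : ∀ i ∈ s, m i ≤ k)
    (h : ∀ N : ℕ, 0 ≤ ∑ i ∈ s, a i * ((N : ℝ) + 1) ^ m i) :
    0 ≤ ∑ i ∈ s with m i = k, a i := by
  let q : ℝ → ℝ := fun x => ∑ i ∈ s, a i * x ^ (k - m i)
  have hq : Continuous q := by fun_prop
  have hq0 : q 0 = ∑ i ∈ s with m i = k, a i := by
    rw [sum_filter]
    refine sum_congr rfl fun i hi => ?_
    by_cases him : m i = k
    · simp [him]
    · simp [him, zero_pow (show k - m i ≠ 0 by have := hmk i hi; omega)]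
  have hqN : ∀ N : ℕ, 0 ≤ q (1 / ((N : ℝ) + 1)) := by
    intro N
    have hN : ((N : ℝ) + 1) ≠ 0 := by positivity
    have : q (1 / ((N : ℝ) + 1)) = (∑ i ∈ s, a i * ((N : ℝ) + 1) ^ m i) / ((N : ℝ) + 1) ^ k := by
      rw [sum_div]
      refine sum_congr rfl fun i hi => ?_
      rw [one_div_pow, pow_sub₀ _ hN (hmk i hi)]
      field_simp
    rw [this]
    exact div_nonneg (h N) (by positivity)
  rw [← hq0]
  exact ge_of_tendsto' ((hq.tendsto 0).comp tendsto_one_div_add_atTop_nhds_zero_nat) hqN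

theorem sum_blockers_nonneg_of_mem_coneK {n : ℕ} {ℐ : Finset (Finset ℕ)}
    (hℐ : ∀ I ∈ ℐ, I ⊆ Icc 1 n) (hconv : ∀ I ∈ ℐ, (I : Set ℕ).OrdConnected)
    {a : Finset ℕ → ℝ} (ha : a ∈ coneK (n + 1)) :
    0 ≤ ∑ S ∈ (Icc 1 n).powerset.filter (fun S => ∀ I ∈ ℐ, (S ∩ I).Nonempty), a S := by
  have key := leadingCoeff_nonneg_of_forall_sum_mul_pow_nonneg (Icc 1 n).powerset a
    (fun S => #(ℐ.filter fun I => (S ∩ I).Nonempty)) (fun S _ => card_filter_le _ _) fun N => by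
      have hN := ha.2 (BilleraHetyei.poset n N ℐ hℐ) rfl
      rw [Nat.add_sub_cancel] at hN
      refine hN.trans_eq (sum_congr rfl fun S hS => ?_)
      rw [BilleraHetyei.flagNum_poset hℐ hconv fun i hi => ?_]
      · push_cast
        rfl
      · have := mem_Icc.1 (mem_powerset.1 hS hi)
        omega
  simpa only [card_filter_eq_iff] using key

lemma single_mem_coneK {r : ℕ} {S : Finset ℕ} (hS : S ⊆ Icc 1 (r - 1)) :
    Pi.single S 1 ∈ coneK r :=
  ⟨fun S' hS' => Pi.single_eq_of_ne (by rintro rfl; exact hS' hS) _,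
    fun P _ => by simp [Pi.single_apply, hS]⟩

lemma single_sub_single_mem_coneK {r : ℕ} {S T : Finset ℕ} (hST : S ⊆ T)
    (hT : T ⊆ Icc 1 (r - 1)) : Pi.single T 1 - Pi.single S 1 ∈ coneK r := by
  refine ⟨fun S' hS' => ?_, fun P hP => ?_⟩
  · have hT' : S' ≠ T := by rintro rfl; exact hS' hT
    have hS' : S' ≠ S := by rintro rfl; exact hS' (hST.trans hT)
    simp [hT', hS']
  · have : (flagNum P S : ℝ) ≤ flagNum P T := by
      exact_mod_cast P.flagNum_mono hST fun i hi => by have := mem_Icc.1 (hT hi); omega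
    simpa [Pi.single_apply, sub_mul, sum_sub_distrib, hT, hST.trans hT] using this

lemma supportedSpace_le_span_single (n : ℕ) : supportedSpace n ≤ Submodule.span ℝ
    (Set.range fun S : (Icc 1 n).powerset => (Pi.single S.1 1 : Finset ℕ → ℝ)) := by
  intro a ha
  have : a = ∑ S ∈ (Icc 1 n).powerset, a S • Pi.single S 1 := by
    funext S₀
    by_cases hS₀ : S₀ ⊆ Icc 1 n
    · simp [Finset.sum_apply, Pi.single_apply, hS₀]
    · simp [Finset.sum_apply, Pi.single_apply, hS₀, ha S₀ hS₀]
  rw [this]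
  exact Submodule.sum_mem _ fun S hS =>
    Submodule.smul_mem _ _ (Submodule.subset_span ⟨⟨S, hS⟩, rfl⟩)

theorem span_coneK (n : ℕ) : Submodule.span ℝ (coneK (n + 1)) = supportedSpace n := by
  refine le_antisymm (Submodule.span_le.2 fun a ha S hS => ha.1 S (by simpa using hS)) ?_
  refine (supportedSpace_le_span_single n).trans (Submodule.span_mono ?_)
  rintro _ ⟨⟨S, hS⟩, rfl⟩
  exact single_mem_coneK (by simpa using hS)

instance (n : ℕ) : FiniteDimensional ℝ (supportedSpace n) :=
  have := FiniteDimensional.span_of_finite ℝ (Set.finite_range fun S : (Icc 1 n).powerset =>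
    (Pi.single S.1 1 : Finset ℕ → ℝ))
  Submodule.finiteDimensional_of_le (supportedSpace_le_span_single n)

lemma finrank_supportedSpace_le (n : ℕ) : Module.finrank ℝ (supportedSpace n) ≤ 2 ^ n := by
  have := FiniteDimensional.span_of_finite ℝ (Set.finite_range fun S : (Icc 1 n).powerset =>
    (Pi.single S.1 1 : Finset ℕ → ℝ))
  refine (Submodule.finrank_mono (supportedSpace_le_span_single n)).trans
    ((finrank_range_le_card _).trans_eq ?_)
  simp

def coneFace (n : ℕ) (p : Finset ℕ → Prop) [DecidablePred p] : Set (Finset ℕ → ℝ) :=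
  {a | a ∈ coneK (n + 1) ∧ ∑ S ∈ (Icc 1 n).powerset.filter p, a S = 0}

section coneFace

variable (n : ℕ) (p : Finset ℕ → Prop) [DecidablePred p]

lemma span_coneFace_le : Submodule.span ℝ (coneFace n p) ≤ supportedSpace n :=
  (Submodule.span_mono fun _ ha => ha.1).trans (span_coneK n).le

/-- The functional vanishes on the face but not at the top basis vector `e_{[1,n]}`. -/
lemma finrank_span_coneFace_le (hp : p (Icc 1 n)) :
    Module.finrank ℝ (Submodule.span ℝ (coneFace n p)) ≤ 2 ^ n - 1 := by
  let ε : (Finset ℕ → ℝ) →ₗ[ℝ] ℝ := ∑ S ∈ (Icc 1 n).powerset.filter p, LinearMap.proj S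
  have hε : ∀ a, ε a = ∑ S ∈ (Icc 1 n).powerset.filter p, a S := fun a => by simp [ε]
  have hlt : Submodule.span ℝ (coneFace n p) < supportedSpace n := by
    refine (span_coneFace_le n p).lt_of_ne fun h => ?_
    have hT : Pi.single (Icc 1 n) 1 ∈ supportedSpace n :=
      span_coneK n ▸ Submodule.subset_span (single_mem_coneK (by simp))
    have hker : coneFace n p ⊆ LinearMap.ker ε := fun a ha =>
      LinearMap.mem_ker.2 ((hε a).trans ha.2)
    have := Submodule.span_le.2 hker (h ▸ hT)
    simp [hε, Pi.single_apply, hp] at this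
  have := Submodule.finrank_lt_finrank_of_lt hlt
  have := finrank_supportedSpace_le n
  omega

/-- The vectors `e_S` (for `¬ p S`) and `e_{[1,n]} - e_S` (for `p S`), `S ⊊ [1,n]`, lie in the face;
up to sign they are `e_S` modulo `e_{[1,n]}`, hence independent. -/
lemma le_finrank_span_coneFace (hp : p (Icc 1 n)) :
    2 ^ n - 1 ≤ Module.finrank ℝ (Submodule.span ℝ (coneFace n p)) := by
  let E := (Icc 1 n).powerset.erase (Icc 1 n)
  let v (S : E) : Finset ℕ → ℝ := Pi.single S.1 1 - if p S.1 then Pi.single (Icc 1 n) 1 else 0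
  have hSE : ∀ S : E, S.1 ⊆ Icc 1 n ∧ S.1 ≠ Icc 1 n := fun S =>
    ⟨mem_powerset.1 (mem_of_mem_erase S.2), ne_of_mem_erase S.2⟩
  have hv : LinearIndependent ℝ v := by
    refine LinearIndependent.of_comp (LinearMap.funLeft ℝ ℝ (Subtype.val : E → Finset ℕ)) ?_
    convert (Pi.basisFun ℝ E).linearIndependent
    ext S S'
    simp only [Function.comp_apply, LinearMap.funLeft_apply, Pi.basisFun_apply, v, Pi.sub_apply]
    split_ifs <;> simp [Pi.single_apply, (hSE S').2]
  have hvface : Set.range v ⊆ Submodule.span ℝ (coneFace n p) := by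
    rintro _ ⟨S, rfl⟩
    obtain ⟨hST, hne⟩ := hSE S
    by_cases hpS : p S.1
    · have hface : Pi.single (Icc 1 n) 1 - Pi.single S.1 1 ∈ coneFace n p :=
        ⟨single_sub_single_mem_coneK hST (by simp), by simp [Pi.single_apply, hST, hpS, hp]⟩
      simpa [v, hpS] using Submodule.neg_mem _ (Submodule.subset_span hface)
    · have hface : Pi.single S.1 1 ∈ coneFace n p :=
        ⟨single_mem_coneK (by simpa using hST), by simp [Pi.single_apply, hST, hpS]⟩
      simpa [v, hpS] using Submodule.subset_span hface
  calc 2 ^ n - 1 = Fintype.card E := by simp [E, card_erase_of_mem]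
    _ = Module.finrank ℝ (Submodule.span ℝ (Set.range v)) := (finrank_span_eq_card hv).symm
    _ ≤ _ := by
      have := Submodule.finiteDimensional_of_le (span_coneFace_le n p)
      exact Submodule.finrank_mono (Submodule.span_le.2 hvface)

end coneFace

theorem stmt_3_general (n : ℕ) (ℐ : Finset (Finset ℕ))
    (hℐ : ∀ I ∈ ℐ, ∃ p q : ℕ, 1 ≤ p ∧ p ≤ q ∧ q ≤ n ∧ I = Finset.Icc p q) :
    Submodule.span ℝ (coneK (n + 1)) = supportedSpace n ∧
    (∀ a ∈ coneK (n + 1),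
        0 ≤ ∑ S ∈ (Finset.Icc 1 n).powerset.filter
              (fun S => ∀ I ∈ ℐ, (S ∩ I).Nonempty), a S) ∧
    Module.finrank ℝ
        (Submodule.span ℝ {a | a ∈ coneK (n + 1) ∧
          ∑ S ∈ (Finset.Icc 1 n).powerset.filter
              (fun S => ∀ I ∈ ℐ, (S ∩ I).Nonempty), a S = 0}) = 2 ^ n - 1 := by
  have hsub : ∀ I ∈ ℐ, I ⊆ Icc 1 n := by
    intro I hI
    obtain ⟨p, q, hp, -, hq, rfl⟩ := hℐ I hI
    exact Icc_subset_Icc hp hq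
  have hconv : ∀ I ∈ ℐ, (I : Set ℕ).OrdConnected := by
    intro I hI
    obtain ⟨p, q, -, -, -, rfl⟩ := hℐ I hI
    rw [coe_Icc]
    exact Set.ordConnected_Icc
  have hblocker : ∀ I ∈ ℐ, (Icc 1 n ∩ I).Nonempty := by
    intro I hI
    obtain ⟨p, q, -, hpq, -, rfl⟩ := hℐ I hI
    rw [inter_eq_right.2 (hsub _ hI)]
    exact nonempty_Icc.2 hpq
  exact ⟨span_coneK n, fun a ha => sum_blockers_nonneg_of_mem_coneK hsub hconv ha,
    (finrank_span_coneFace_le n _ hblocker).antisymm (le_finrank_span_coneFace n _ hblocker)⟩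

theorem stmt_3 (n : ℕ) (hn : 1 ≤ n) (ℐ : Finset (Finset ℕ))
    (hℐ : ∀ I ∈ ℐ, ∃ p q : ℕ, 1 ≤ p ∧ p ≤ q ∧ q ≤ n ∧ I = Finset.Icc p q) :
    Submodule.span ℝ (coneK (n + 1)) = supportedSpace n ∧
    (∀ a ∈ coneK (n + 1),
        0 ≤ ∑ S ∈ (Finset.Icc 1 n).powerset.filter
              (fun S => ∀ I ∈ ℐ, (S ∩ I).Nonempty), a S) ∧
    Module.finrank ℝ
        (Submodule.span ℝ {a | a ∈ coneK (n + 1) ∧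
          ∑ S ∈ (Finset.Icc 1 n).powerset.filter
              (fun S => ∀ I ∈ ℐ, (S ∩ I).Nonempty), a S = 0}) = 2 ^ n - 1 :=
  stmt_3_general n ℐ hℐ
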